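/- Let d ≥ 1, let Ω ⊆ ℝ^d be a bounded measurable set, let ρ : ℝ^d → ℝ be a nonnegative integrable function with associated measure π(A) = ∫_A ρ(x) dx, let dist : ℝ^d × ℝ^d → ℝ be a continuous nonnegative function, let y_1, …, y_K ∈ ℝ^d, let c ∈ ℝ^K, and let w ∈ ℝ^K. Define F(w) = ∫_Ω min_{j=1,…,K}(dist(x,y_j) − w_j) ρ(x) dx + Σ_k w_k c_k and the tie-broken power cells V_k(w) = {x ∈ Ω : dist(x,y_k) − w_k ≤ dist(x,y_j) − w_j for all j, with strict inequality for all j < k}. Fix i ∈ {1,…,K} and suppose the tie set has measure zero: π({x ∈ Ω : dist(x,y_i) − w_i = min_{j ≠ i}(dist(x,y_j) − w_j)}) = 0. Then the function t ↦ F(w + t e_i) is differentiable at t = 0 with derivative c_i − π(V_i(w)), where e_i is the i-th standard basis vector of ℝ^K. -/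

import Mathlib

open MeasureTheory

/-- The tie-broken power cell of the generator `y k` with weight `w k` in `Ω`: points of `Ω`
where `dst x (y k) - w k` is minimal among all generators, with ties assigned to the
smallest index. -/
def powerCell {d K : ℕ} (Ω : Set (EuclideanSpace ℝ (Fin d)))
    (dst : EuclideanSpace ℝ (Fin d) → EuclideanSpace ℝ (Fin d) → ℝ)
    (y : Fin K → EuclideanSpace ℝ (Fin d)) (w : Fin K → ℝ) (k : Fin K) :
    Set (EuclideanSpace ℝ (Fin d)) :=
  {x ∈ Ω | (∀ j, dst x (y k) - w k ≤ dst x (y j) - w j) ∧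
    ∀ j, j < k → dst x (y k) - w k < dst x (y j) - w j}

/-! For fixed `x`, `t ↦ minⱼ (dst x (y j) - w j - t δᵢⱼ)` is `1`-Lipschitz; at `t = 0` it has
derivative `-1` when `i` is the strict minimiser (then `x ∈ V_i`) and `0` when another index is
strictly smaller (then `x ∉ V_i`). The remaining points form the tie set, which is `ρ`-null, so
differentiating under the integral with dominating function `ρ` gives `-π(V_i)`, and the linear
term contributes `c i`. -/
open Filter Topology

section FiniteInfimum

variable {ι : Type*} [Finite ι]

lemma continuous_ciInf_of_finite {X L : Type*} [TopologicalSpace X]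
    [ConditionallyCompleteLattice L] [TopologicalSpace L] [ContinuousInf L] [Nonempty ι]
    {f : ι → X → L} (hf : ∀ j, Continuous (f j)) : Continuous fun x => ⨅ j, f j x := by
  have := Fintype.ofFinite ι
  simpa only [Finset.inf'_univ_eq_ciInf] using
    Continuous.finset_inf'_apply Finset.univ_nonempty fun j _ => hf j

lemma LipschitzWith.ciInf_of_finite {X : Type*} [PseudoMetricSpace X] [Nonempty ι] {K : NNReal}
    {f : ι → X → ℝ} (hf : ∀ j, LipschitzWith K (f j)) : LipschitzWith K fun x => ⨅ j, f j x :=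
  LipschitzWith.of_le_add_mul K fun x x' => by
    rw [← sub_le_iff_le_add]
    refine le_ciInf fun j => sub_le_iff_le_add.2 ?_
    exact (ciInf_le (Set.finite_range _).bddBelow j).trans ((hf j).le_add_mul x x')

variable (a : ι → ℝ) (i : ι)

-- If `i` is the only index, the first alternative holds, so the junk value `0` of the empty
-- infimum in the third one never matters.
lemma forall_lt_or_exists_lt_or_eq_iInf_ne :
    (∀ j ≠ i, a i < a j) ∨ (∃ j ≠ i, a j < a i) ∨ a i = ⨅ j : {j // j ≠ i}, a j := by
  refine or_iff_not_imp_left.2 fun hlt => or_iff_not_imp_left.2 fun hgt => ?_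
  push Not at hlt hgt
  obtain ⟨j, hji, hj⟩ := hlt
  have : Nonempty {j // j ≠ i} := ⟨⟨j, hji⟩⟩
  exact le_antisymm (le_ciInf fun k => hgt k k.2)
    ((ciInf_le (Set.finite_range _).bddBelow ⟨j, hji⟩).trans hj)

variable [DecidableEq ι]

lemma lipschitzWith_iInf_sub_smul_single :
    LipschitzWith 1 fun t : ℝ => ⨅ j, (a - t • Pi.single i 1 : ι → ℝ) j := by
  have : Nonempty ι := ⟨i⟩
  refine LipschitzWith.ciInf_of_finite fun j => LipschitzWith.of_dist_le_mul fun t s => ?_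
  rcases eq_or_ne j i with rfl | hj
  · simp only [Pi.sub_apply, Pi.smul_apply, Pi.single_eq_same, smul_eq_mul, mul_one,
      Real.dist_eq, sub_sub_sub_cancel_left, NNReal.coe_one, one_mul, abs_sub_comm, le_refl]
  · simp [hj]

variable {a i}

lemma hasDerivAt_iInf_sub_smul_single_of_forall_lt (h : ∀ j ≠ i, a i < a j) :
    HasDerivAt (fun t : ℝ => ⨅ j, (a - t • Pi.single i 1 : ι → ℝ) j) (-1) 0 := by
  have : Nonempty ι := ⟨i⟩
  have hcont : Tendsto (fun t : ℝ => a i - t) (𝓝 0) (𝓝 (a i)) :=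
    (continuous_const.sub continuous_id).tendsto' 0 (a i) (sub_zero _)
  have hnear : ∀ᶠ t : ℝ in 𝓝 0, ∀ j ≠ i, a i - t < a j :=
    eventually_all.2 fun j => eventually_imp_distrib_left.2 fun hj =>
      hcont.eventually_lt_const (h j hj)
  refine ((hasDerivAt_id 0).const_sub (a i)).congr_of_eventuallyEq ?_
  filter_upwards [hnear] with t ht
  refine le_antisymm ?_ (le_ciInf fun j => ?_)
  · exact (ciInf_le (Set.finite_range _).bddBelow i).trans (by simp)
  rcases eq_or_ne j i with rfl | hj
  · simp
  · simpa [hj] using (ht j hj).le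

lemma hasDerivAt_iInf_sub_smul_single_of_exists_lt (h : ∃ j ≠ i, a j < a i) :
    HasDerivAt (fun t : ℝ => ⨅ j, (a - t • Pi.single i 1 : ι → ℝ) j) 0 0 := by
  obtain ⟨j, hji, hj⟩ := h
  have : Nonempty ι := ⟨i⟩
  have bdd : ∀ v : ι → ℝ, BddBelow (Set.range v) := fun v => (Set.finite_range v).bddBelow
  have hnear : ∀ᶠ t : ℝ in 𝓝 0, a j < a i - t :=
    ((continuous_const.sub continuous_id).tendsto' 0 (a i) (sub_zero _)).eventually_const_lt hj
  refine (hasDerivAt_const 0 (⨅ k, a k)).congr_of_eventuallyEq ?_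
  filter_upwards [hnear] with t ht
  have hsingle : ∀ k ≠ i, (a - t • Pi.single i 1 : ι → ℝ) k = a k := fun k hk => by simp [hk]
  apply le_antisymm
  · refine le_ciInf fun k => ?_
    rcases eq_or_ne k i with rfl | hk
    · exact (ciInf_le (bdd _) j).trans ((hsingle j hji).le.trans hj.le)
    · exact (ciInf_le (bdd _) k).trans (hsingle k hk).le
  · refine le_ciInf fun k => ?_
    rcases eq_or_ne k i with rfl | hk
    · exact (ciInf_le (bdd _) j).trans (by simpa using ht.le)
    · exact (ciInf_le (bdd _) k).trans (hsingle k hk).ge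

end FiniteInfimum

lemma ae_restrict_imp_eq_zero_of_setIntegral_eq_zero {α : Type*} [MeasurableSpace α]
    {μ : Measure α} {Ω : Set α} {p : α → Prop} (hΩ : MeasurableSet Ω)
    (hp : MeasurableSet {x | p x}) {ρ : α → ℝ} (hρ0 : ∀ x, 0 ≤ ρ x) (hρ : Integrable ρ μ)
    (h : ∫ x in {x ∈ Ω | p x}, ρ x ∂μ = 0) : ∀ᵐ x ∂μ.restrict Ω, p x → ρ x = 0 := by
  have hT : MeasurableSet {x ∈ Ω | p x} := hΩ.inter hp
  have hzero := (integral_eq_zero_iff_of_nonneg hρ0 hρ.restrict).1 h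
  filter_upwards [ae_restrict_of_ae ((ae_restrict_iff' hT).1 hzero), ae_restrict_mem hΩ]
    with x hx hxΩ hpx using hx ⟨hxΩ, hpx⟩

section PowerCell

variable {d K : ℕ} {Ω : Set (EuclideanSpace ℝ (Fin d))}
  {dst : EuclideanSpace ℝ (Fin d) → EuclideanSpace ℝ (Fin d) → ℝ}
  {y : Fin K → EuclideanSpace ℝ (Fin d)} {w : Fin K → ℝ} {i : Fin K}
  {x : EuclideanSpace ℝ (Fin d)}

lemma powerCell_subset : powerCell Ω dst y w i ⊆ Ω := fun _ hx => hx.1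

lemma measurableSet_powerCell (hΩ : MeasurableSet Ω)
    (hdst : ∀ j, Measurable fun x => dst x (y j)) : MeasurableSet (powerCell Ω dst y w i) := by
  have hcost : ∀ j, Measurable fun x => dst x (y j) - w j := fun j => (hdst j).sub_const _
  refine hΩ.inter <| measurableSet_setOfPred.2 <| .and ?_ ?_
  · exact .forall fun j => measurableSet_setOfPred.1 (measurableSet_le (hcost i) (hcost j))
  · exact .forall fun j => .forall fun _ =>
      measurableSet_setOfPred.1 (measurableSet_lt (hcost i) (hcost j))

lemma mem_powerCell_of_forall_lt (hx : x ∈ Ω)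
    (h : ∀ j ≠ i, dst x (y i) - w i < dst x (y j) - w j) : x ∈ powerCell Ω dst y w i := by
  refine ⟨hx, fun j => ?_, fun j hj => h j hj.ne⟩
  rcases eq_or_ne j i with rfl | hj
  · exact le_rfl
  · exact (h j hj).le

lemma notMem_powerCell_of_exists_lt (h : ∃ j ≠ i, dst x (y j) - w j < dst x (y i) - w i) :
    x ∉ powerCell Ω dst y w i := fun hx =>
  let ⟨j, _, hj⟩ := h
  (hx.2.1 j).not_gt hj

lemma hasDerivAt_iInf_mul_indicator_powerCell {ρ : EuclideanSpace ℝ (Fin d) → ℝ} (hx : x ∈ Ω)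
    (htie : dst x (y i) - w i = ⨅ j : {j : Fin K // j ≠ i}, (dst x (y j) - w j) → ρ x = 0) :
    HasDerivAt
      (fun t : ℝ => (⨅ j, ((fun j => dst x (y j) - w j) - t • Pi.single i 1 : Fin K → ℝ) j) * ρ x)
      (-(powerCell Ω dst y w i).indicator ρ x) 0 := by
  rcases forall_lt_or_exists_lt_or_eq_iInf_ne (fun j => dst x (y j) - w j) i
    with hlt | hgt | htie'
  · rw [Set.indicator_of_mem (mem_powerCell_of_forall_lt hx hlt)]
    simpa using (hasDerivAt_iInf_sub_smul_single_of_forall_lt hlt).mul_const (ρ x)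
  · rw [Set.indicator_of_notMem (notMem_powerCell_of_exists_lt hgt), neg_zero]
    simpa using (hasDerivAt_iInf_sub_smul_single_of_exists_lt hgt).mul_const (ρ x)
  · have hρ : ρ x = 0 := htie htie'
    rw [Set.indicator_apply_eq_zero.2 fun _ => hρ, neg_zero]
    simpa [hρ] using hasDerivAt_const (0 : ℝ) (0 : ℝ)

end PowerCell

lemma hasDerivAt_setIntegral_iInf_mul {d K : ℕ} {Ω : Set (EuclideanSpace ℝ (Fin d))}
    (hΩb : Bornology.IsBounded Ω) (hΩm : MeasurableSet Ω)
    {ρ : EuclideanSpace ℝ (Fin d) → ℝ} (hρ0 : ∀ x, 0 ≤ ρ x) (hρi : Integrable ρ)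
    {dst : EuclideanSpace ℝ (Fin d) → EuclideanSpace ℝ (Fin d) → ℝ}
    (hdstc : Continuous fun p : EuclideanSpace ℝ (Fin d) × EuclideanSpace ℝ (Fin d) => dst p.1 p.2)
    {y : Fin K → EuclideanSpace ℝ (Fin d)} {w : Fin K → ℝ} {i : Fin K}
    (htie : (∫ x in {x ∈ Ω | dst x (y i) - w i
        = ⨅ j : {j : Fin K // j ≠ i}, (dst x (y (j : Fin K)) - w (j : Fin K))}, ρ x) = 0) :
    HasDerivAt (fun t : ℝ =>
        ∫ x in Ω, (⨅ j, (dst x (y j) - (w + t • (Pi.single i 1 : Fin K → ℝ)) j)) * ρ x)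
      (-∫ x in powerCell Ω dst y w i, ρ x) 0 := by
  have : Nonempty (Fin K) := ⟨i⟩
  have hdst : ∀ j, Continuous fun x => dst x (y j) :=
    fun j => hdstc.comp (continuous_id.prodMk continuous_const)
  have hshift : ∀ x (t : ℝ), (⨅ j, (dst x (y j) - (w + t • (Pi.single i 1 : Fin K → ℝ)) j))
      = ⨅ j, ((fun j => dst x (y j) - w j) - t • Pi.single i 1 : Fin K → ℝ) j :=
    fun x t => by simp only [Pi.sub_apply, Pi.add_apply, sub_add_eq_sub_sub]
  simp only [hshift]
  have hcont : ∀ t : ℝ, Continuous fun x =>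
      ⨅ j, ((fun j => dst x (y j) - w j) - t • Pi.single i 1 : Fin K → ℝ) j :=
    fun t => continuous_ciInf_of_finite fun j =>
      ((hdst j).sub continuous_const).sub continuous_const
  have hPm : MeasurableSet (powerCell Ω dst y w i) :=
    measurableSet_powerCell hΩm fun j => (hdst j).measurable
  have hnull := ae_restrict_imp_eq_zero_of_setIntegral_eq_zero hΩm
    (measurableSet_eq_fun ((hdst i).sub continuous_const).measurable
      (.iInf fun j : {j : Fin K // j ≠ i} => ((hdst j).sub continuous_const).measurable))
    hρ0 hρi htie
  have hderiv := (hasDerivAt_integral_of_dominated_loc_of_lip (μ := volume.restrict Ω)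
    (F' := fun x => -(powerCell Ω dst y w i).indicator ρ x) (bound := ρ) Filter.univ_mem
    (.of_forall fun t => (hcont t).aestronglyMeasurable.mul hρi.aestronglyMeasurable.restrict)
    (hρi.integrableOn.continuousOn_mul_of_subset (hcont 0).continuousOn hΩb.isCompact_closure
      hΩm subset_closure)
    (hρi.aestronglyMeasurable.indicator hPm).neg.restrict
    (.of_forall fun x => ?_) hρi.restrict ?_).2
  · rwa [integral_neg, setIntegral_indicator hPm, Set.inter_eq_right.2 powerCell_subset] at hderiv
  · refine (LipschitzWith.of_dist_le_mul fun t s => ?_).lipschitzOnWith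
    rw [Real.dist_eq, Pi.mul_apply, Pi.mul_apply, ← sub_mul, abs_mul, Real.coe_nnabs, mul_comm]
    gcongr
    simpa [Real.dist_eq] using (lipschitzWith_iInf_sub_smul_single _ i).dist_le_mul t s
  · filter_upwards [hnull, ae_restrict_mem hΩm] with x hx hxΩ
    exact hasDerivAt_iInf_mul_indicator_powerCell hxΩ hx

lemma hasDerivAt_sum_add_smul_single_mul {ι : Type*} [Fintype ι] [DecidableEq ι]
    (w c : ι → ℝ) (i : ι) (t₀ : ℝ) :
    HasDerivAt (fun t : ℝ => ∑ k, (w + t • Pi.single i 1 : ι → ℝ) k * c k) (c i) t₀ := by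
  have hline : HasDerivAt (fun t : ℝ => w + t • (Pi.single i 1 : ι → ℝ)) (Pi.single i 1) t₀ := by
    simpa using ((hasDerivAt_id t₀).smul_const (Pi.single i 1 : ι → ℝ)).const_add w
  simpa [Pi.single_apply] using
    HasDerivAt.fun_sum (u := Finset.univ) fun k _ => (hasDerivAt_pi.1 hline k).mul_const (c k)

theorem stmt_16_general (d K : ℕ)
    (Ω : Set (EuclideanSpace ℝ (Fin d)))
    (hΩb : Bornology.IsBounded Ω) (hΩm : MeasurableSet Ω)
    (ρ : EuclideanSpace ℝ (Fin d) → ℝ) (hρ0 : ∀ x, 0 ≤ ρ x) (hρi : Integrable ρ)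
    (dst : EuclideanSpace ℝ (Fin d) → EuclideanSpace ℝ (Fin d) → ℝ)
    (hdstc : Continuous fun p : EuclideanSpace ℝ (Fin d) × EuclideanSpace ℝ (Fin d) => dst p.1 p.2)
    (y : Fin K → EuclideanSpace ℝ (Fin d)) (c : Fin K → ℝ)
    (w : Fin K → ℝ) (i : Fin K)
    (htie : (∫ x in {x ∈ Ω | dst x (y i) - w i
        = ⨅ j : {j : Fin K // j ≠ i}, (dst x (y (j : Fin K)) - w (j : Fin K))}, ρ x) = 0) :
    HasDerivAt (fun t : ℝ =>
        (∫ x in Ω, (⨅ j, (dst x (y j) - (w + t • (Pi.single i 1 : Fin K → ℝ)) j)) * ρ x)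
        + ∑ k, (w + t • (Pi.single i 1 : Fin K → ℝ)) k * c k)
      (c i - ∫ x in powerCell Ω dst y w i, ρ x) 0 := by
  rw [sub_eq_neg_add]
  exact (hasDerivAt_setIntegral_iInf_mul hΩb hΩm hρ0 hρi hdstc htie).add
    (hasDerivAt_sum_add_smul_single_mul w c i 0)

theorem stmt_16 (d K : ℕ) (hd : 1 ≤ d) (hK : 0 < K)
    (Ω : Set (EuclideanSpace ℝ (Fin d)))
    (hΩb : Bornology.IsBounded Ω) (hΩm : MeasurableSet Ω)
    (ρ : EuclideanSpace ℝ (Fin d) → ℝ) (hρ0 : ∀ x, 0 ≤ ρ x) (hρi : Integrable ρ)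
    (dst : EuclideanSpace ℝ (Fin d) → EuclideanSpace ℝ (Fin d) → ℝ)
    (hdstc : Continuous fun p : EuclideanSpace ℝ (Fin d) × EuclideanSpace ℝ (Fin d) => dst p.1 p.2)
    (hdst0 : ∀ x y, 0 ≤ dst x y)
    (y : Fin K → EuclideanSpace ℝ (Fin d)) (c : Fin K → ℝ)
    (w : Fin K → ℝ) (i : Fin K)
    (htie : (∫ x in {x ∈ Ω | dst x (y i) - w i
        = ⨅ j : {j : Fin K // j ≠ i}, (dst x (y (j : Fin K)) - w (j : Fin K))}, ρ x) = 0) :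
    HasDerivAt (fun t : ℝ =>
        (∫ x in Ω, (⨅ j, (dst x (y j) - (w + t • (Pi.single i 1 : Fin K → ℝ)) j)) * ρ x)
        + ∑ k, (w + t • (Pi.single i 1 : Fin K → ℝ)) k * c k)
      (c i - ∫ x in powerCell Ω dst y w i, ρ x) 0 :=
  stmt_16_general d K Ω hΩb hΩm ρ hρ0 hρi dst hdstc y c w i htie
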